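/- Let Y be an integral projective variety over K and R a globally generated line bundle on Y with h^1(Y, R) = 0. Set X := Y × ℙ^1 with projections π_1 : X → Y and π_2 : X → ℙ^1, and for t ∈ ℤ set R⊠(t) := π_1^*(R) ⊗ π_2^*(O_{ℙ^1}(t)). Let Z ⊂ X be a zero-dimensional closed subscheme such that h^1(X, I_Z ⊗ R⊠(z)) = 0 for some z ∈ ℕ, and let e be the minimal such natural number. For t ≥ 0, let μ_t : H^0(π_2^*(O_{ℙ^1}(1))) ⊗ H^0(I_Z ⊗ R⊠(t)) → H^0(I_Z ⊗ R⊠(t+1)) be the multiplication map. Then dim coker(μ_e) = h^1(X, I_Z ⊗ R⊠(e−1)); in particular, if e = 0 then dim coker(μ_0) = deg(Z). -/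

import Mathlib

open Module MvPolynomial
open scoped TensorProduct

namespace MultiProjPaper

/-- `H^0(ℙ^m, O_{ℙ^m}(t))`: the space of degree-`t` homogeneous polynomials in
`K[x_0, …, x_m]` (as a type, to keep typeclass inference manageable). -/
def PmT (K : Type) [Field K] (m t : ℕ) : Type :=
  ↥(homogeneousSubmodule (Fin (m + 1)) K t)

noncomputable instance (K : Type) [Field K] (m t : ℕ) : AddCommGroup (PmT K m t) :=
  inferInstanceAs (AddCommGroup ↥(homogeneousSubmodule (Fin (m + 1)) K t))

noncomputable instance (K : Type) [Field K] (m t : ℕ) : Module K (PmT K m t) :=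
  inferInstanceAs (Module K ↥(homogeneousSubmodule (Fin (m + 1)) K t))

/-- The homogeneous polynomial underlying an element of `H^0(ℙ^m, O(t))`. -/
def PmT.poly {K : Type} [Field K] {m t : ℕ} (g : PmT K m t) :
    MvPolynomial (Fin (m + 1)) K := g.1

lemma PmT.isHomogeneous {K : Type} [Field K] {m t : ℕ} (g : PmT K m t) :
    (PmT.poly g).IsHomogeneous t := g.2

lemma PmT.poly_add {K : Type} [Field K] {m t : ℕ} (g g' : PmT K m t) :
    (g + g').poly = g.poly + g'.poly := rfl

lemma PmT.poly_smul {K : Type} [Field K] {m t : ℕ} (c : K) (g : PmT K m t) :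
    (c • g).poly = c • g.poly := rfl

/-- Model of a zero-dimensional closed subscheme `Z` of `M = Y × ℙ^m`, where `Y` is an
integral projective variety over `K` and `R` is a globally generated line bundle on `Y`
with `h^1(Y, R) = 0` and with space of global sections `V = H^0(Y, R)`.

`Z` is encoded by its (finite-dimensional, commutative) algebra of global functions
`A = H^0(Z, O_Z)` (so `deg Z = dim_K A`), together with:
* `ρ : V → A`, the restriction map `H^0(Y, R) → H^0(Z, R|_Z) ≅ A` (after a trivialization
  of the line bundle `R` on the zero-dimensional scheme `Z`);
* `ξ : Fin (m+1) → A`, the restrictions to `Z` of the homogeneous coordinates of `ℙ^m`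
  (after a trivialization of `O(1)|_Z`).

The field `spanξ` records that the homogeneous coordinates of `ℙ^m` have no common zero
(hence generate the unit ideal on the finite scheme `Z`); the field `spanρ` is the model
counterpart of the hypothesis that `R` is globally generated (its global sections have no
common zero on `Y`, hence generate the unit ideal on `Z`).

By the Künneth formula and the hypothesis `h^1(Y, R) = 0`, for `t ∈ ℕ` one has
`H^0(M, R ⊠ (t)) = H^0(Y, R) ⊗ K[x_0, …, x_m]_t`, the space `H^0(M, 𝓘_Z ⊗ R ⊠ (t))` is
the kernel of the evaluation ("restriction to `Z`") map
`H^0(Y, R) ⊗ K[x_0, …, x_m]_t → A`, `σ ⊗ g ↦ ρ(σ)·g(ξ)`, and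
`h^1(M, 𝓘_Z ⊗ R ⊠ (t)) = dim_K A - rank(evaluation map)`. -/
structure ZeroDimInProd (K : Type) [Field K]
    (V : Type) [AddCommGroup V] [Module K V] (m : ℕ) where
  A : Type
  [instCommRing : CommRing A]
  [instAlgebra : Algebra K A]
  [instFinite : Module.Finite K A]
  ρ : V →ₗ[K] A
  ξ : Fin (m + 1) → A
  spanξ : Ideal.span (Set.range ξ) = ⊤
  spanρ : Ideal.span (Set.range ⇑ρ) = ⊤

attribute [instance] ZeroDimInProd.instCommRing ZeroDimInProd.instAlgebra
  ZeroDimInProd.instFinite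

variable {K : Type} [Field K] {V : Type} [AddCommGroup V] [Module K V] {m : ℕ}

/-- The evaluation (restriction to `Z`) map `H^0(Y,R) × K[x]_t → H^0(Z, O_Z)` as a
bilinear map: `(σ, g) ↦ ρ(σ) · g(ξ)`. -/
noncomputable def evBil (Z : ZeroDimInProd K V m) (t : ℕ) :
    V →ₗ[K] PmT K m t →ₗ[K] Z.A :=
  LinearMap.mk₂ K
    (fun v g => Z.ρ v * (aeval Z.ξ) (PmT.poly g))
    (fun v v' g => by simp [add_mul])
    (fun c v g => by simp [smul_mul_assoc])
    (fun v g g' => by simp [PmT.poly_add, mul_add])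
    (fun c v g => by simp [PmT.poly_smul, mul_smul_comm])

/-- The restriction map `H^0(M, R ⊠ (t)) = H^0(Y,R) ⊗ K[x]_t → H^0(Z, O_Z)`. -/
noncomputable def evMap (Z : ZeroDimInProd K V m) (t : ℕ) :
    (V ⊗[K] PmT K m t) →ₗ[K] Z.A :=
  TensorProduct.lift (evBil Z t)

/-- `H^0(M, 𝓘_Z ⊗ R ⊠ (t))` (for `t ∈ ℕ`). -/
def H0IZ (Z : ZeroDimInProd K V m) (t : ℕ) : Type :=
  ↥(LinearMap.ker (evMap Z t))

noncomputable instance (Z : ZeroDimInProd K V m) (t : ℕ) : AddCommGroup (H0IZ Z t) :=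
  inferInstanceAs (AddCommGroup ↥(LinearMap.ker (evMap Z t)))

noncomputable instance (Z : ZeroDimInProd K V m) (t : ℕ) : Module K (H0IZ Z t) :=
  inferInstanceAs (Module K ↥(LinearMap.ker (evMap Z t)))

/-- `h^0(M, 𝓘_Z ⊗ R ⊠ (t))` (for `t ∈ ℕ`). -/
noncomputable def h0ZP (Z : ZeroDimInProd K V m) (t : ℕ) : ℕ :=
  finrank K (H0IZ Z t)

/-- `h^1(M, 𝓘_Z ⊗ R ⊠ (t))` (for `t ∈ ℕ`): `deg Z` minus the rank of the restriction
map `H^0(M, R ⊠ (t)) → H^0(Z, O_Z)`. -/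
noncomputable def h1ZP (Z : ZeroDimInProd K V m) (t : ℕ) : ℕ :=
  finrank K Z.A - finrank K ↥(LinearMap.range (evMap Z t))

end MultiProjPaper

namespace MultiProjPaper

variable {K : Type} [Field K] {V : Type} [AddCommGroup V] [Module K V]

/-- Multiplication of homogeneous polynomials on `ℙ^m`,
`H^0(O(1)) × H^0(O(t)) → H^0(O(t+1))`, as a bilinear map. -/
noncomputable def polyMulBil (K : Type) [Field K] (m t : ℕ) :
    PmT K m 1 →ₗ[K] PmT K m t →ₗ[K] PmT K m (t + 1) :=
  LinearMap.mk₂ K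
    (fun g h => (⟨PmT.poly g * PmT.poly h, by
      rw [mem_homogeneousSubmodule]
      have := g.isHomogeneous.mul h.isHomogeneous
      simpa only [Nat.add_comm 1 t] using this⟩ : PmT K m (t + 1)))
    (fun g g' h => Subtype.ext (by simp [PmT.poly_add, add_mul]; rfl))
    (fun c g h => Subtype.ext (by simp [PmT.poly_smul, smul_mul_assoc]; rfl))
    (fun g h h' => Subtype.ext (by simp [PmT.poly_add, mul_add]; rfl))
    (fun c g h => Subtype.ext (by simp [PmT.poly_smul, mul_smul_comm]; rfl))

lemma evMap_mul (Z : ZeroDimInProd K V 1) (t : ℕ) (g : PmT K 1 1) :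
    (evMap Z (t + 1)).comp (LinearMap.lTensor V ((polyMulBil K 1 t) g)) =
    (LinearMap.mulLeft K ((aeval Z.ξ) (PmT.poly g))).comp (evMap Z t) := by
  apply TensorProduct.ext'
  intro v h
  have hm : PmT.poly ((polyMulBil K 1 t) g h) = PmT.poly g * PmT.poly h := rfl
  simp [evMap, evBil, hm]
  ring

/-- The multiplication map
`μ_t : H^0(π_2^*(O_{ℙ^1}(1))) ⊗ H^0(𝓘_Z ⊗ R ⊠ (t)) → H^0(𝓘_Z ⊗ R ⊠ (t+1))`,
`σ ⊗ τ ↦ σ·τ`. -/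
noncomputable def muMap (Z : ZeroDimInProd K V 1) (t : ℕ) :
    (PmT K 1 1 ⊗[K] H0IZ Z t) →ₗ[K] H0IZ Z (t + 1) :=
  LinearMap.codRestrict (LinearMap.ker (evMap Z (t + 1)))
    (TensorProduct.lift (LinearMap.mk₂ K
      (fun (g : PmT K 1 1) (x : H0IZ Z t) =>
        LinearMap.lTensor V ((polyMulBil K 1 t) g) x.1)
      (fun g g' x => by
        show LinearMap.lTensor V ((polyMulBil K 1 t) (g + g')) x.1 = _
        rw [map_add, LinearMap.lTensor_add, LinearMap.add_apply])
      (fun c g x => by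
        show LinearMap.lTensor V ((polyMulBil K 1 t) (c • g)) x.1 = _
        rw [map_smul, LinearMap.lTensor_smul, LinearMap.smul_apply])
      (fun g x x' => by
        show LinearMap.lTensor V ((polyMulBil K 1 t) g) (x.1 + x'.1) = _
        rw [map_add])
      (fun c g x => by
        show LinearMap.lTensor V ((polyMulBil K 1 t) g) (c • x.1) = _
        rw [map_smul])))
    (by
      intro x
      induction x using TensorProduct.induction_on with
      | zero => simp
      | tmul g y =>
          rw [TensorProduct.lift.tmul, LinearMap.mk₂_apply, LinearMap.mem_ker]
          have h1 := LinearMap.congr_fun (evMap_mul Z t g) y.1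
          simp only [LinearMap.comp_apply, LinearMap.mulLeft_apply] at h1
          rw [h1, LinearMap.mem_ker.mp y.2, mul_zero]
      | add x y hx hy => rw [map_add]; exact add_mem hx hy)

end MultiProjPaper

/-! For `t ≥ 0`, `H⁰(𝓘_Z ⊗ R ⊠ (t))` is the kernel `H_t` of the restriction map
`V ⊗ K[x₀, x₁]_t → A`. Since `x₀` and `x₁` span `H⁰(O(1))`, the image of `μ_t` is that
of `(a, b) ↦ x₀ a + x₁ b` on `H_t × H_t`. By exactness of the Koszul complex of `(x₀, x₁)`
the kernel of this map is `{(x₁ w, -x₀ w)}` (zero for `t = 0`), and `w` lies in `H_{t-1}`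
because `x₀, x₁` have no common zero on `Z`. Hence
`dim coker μ_t = h⁰(t+1) - 2 h⁰(t) + h⁰(t-1)`. Surjectivity of the restriction map
propagates from degree `e` to `e + 1`, so `h⁰(t) = dim V · (t + 1) - deg Z` for
`t = e, e + 1`, while `h⁰(e-1) = dim V · e - deg Z + h¹(e-1)`: the second difference of
the linear terms vanishes and leaves `h¹(e-1)`, or `deg Z` when `e = 0`. -/

namespace MultiProjPaper

section BinaryForms

variable {K : Type} [Field K]

lemma PmT.ext {m t : ℕ} {g h : PmT K m t} (hgh : g.poly = h.poly) : g = h := Subtype.ext hgh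

lemma degree_fin_two (d : Fin 2 →₀ ℕ) : d.degree = d 0 + d 1 := by
  rw [Finsupp.degree_eq_sum, Fin.sum_univ_two]

noncomputable def binaryExponent (t : ℕ) (i : Fin (t + 1)) : Fin 2 →₀ ℕ :=
  Finsupp.single 0 (i : ℕ) + Finsupp.single 1 (t - i)

lemma binaryExponent_apply_zero (t : ℕ) (i : Fin (t + 1)) : binaryExponent t i 0 = i := by
  simp [binaryExponent]

lemma binaryExponent_apply_one (t : ℕ) (i : Fin (t + 1)) : binaryExponent t i 1 = t - i := by
  simp [binaryExponent]

noncomputable def binaryExponentEquiv (t : ℕ) :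
    {d : Fin 2 →₀ ℕ | d.degree = t} ≃ Fin (t + 1) where
  toFun d := ⟨d.1 0, by have := degree_fin_two d.1; have : d.1.degree = t := d.2; omega⟩
  invFun i := ⟨binaryExponent t i, by
    show (binaryExponent t i).degree = t
    rw [degree_fin_two, binaryExponent_apply_zero, binaryExponent_apply_one]
    omega⟩
  left_inv := by
    rintro ⟨d, hd : d.degree = t⟩
    rw [degree_fin_two] at hd
    refine Subtype.ext (Finsupp.ext (Fin.forall_fin_two.mpr ⟨?_, ?_⟩)) <;>
      simp [binaryExponent_apply_zero, binaryExponent_apply_one]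
    omega
  right_inv i := Fin.ext (binaryExponent_apply_zero t i)

variable (K) in
noncomputable def binaryFormBasis (t : ℕ) : Module.Basis (Fin (t + 1)) K (PmT K 1 t) :=
  ((basisRestrictSupport K {d : Fin 2 →₀ ℕ | d.degree = t}).map
    (LinearEquiv.ofEq _ _ (homogeneousSubmodule_eq_finsupp_supported (Fin 2) K t).symm)).reindex
    (binaryExponentEquiv t)

lemma binaryFormBasis_poly (t : ℕ) (i : Fin (t + 1)) :
    (binaryFormBasis K t i).poly = X 0 ^ (i : ℕ) * X 1 ^ (t - i) := by
  have hmon : (binaryFormBasis K t i).poly = monomial (binaryExponent t i) 1 := by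
    unfold binaryFormBasis
    erw [Module.Basis.reindex_apply, Module.Basis.map_apply]
    show ((AddMonoidAlgebra.supportedEquivFinsupp (R := K) (S := K)
      {d : Fin 2 →₀ ℕ | d.degree = t}).symm
      (Finsupp.single ((binaryExponentEquiv t).symm i) 1) : MvPolynomial (Fin 2) K) = _
    simp [AddMonoidAlgebra.supportedEquivFinsupp, single_eq_monomial, binaryExponentEquiv]
  rw [hmon, binaryExponent, ← one_mul (1 : K), ← monomial_mul, X_pow_eq_monomial,
    X_pow_eq_monomial]

instance (t : ℕ) : FiniteDimensional K (PmT K 1 t) :=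
  Module.Finite.of_basis (binaryFormBasis K t)

lemma finrank_binaryForms (t : ℕ) : finrank K (PmT K 1 t) = t + 1 := by
  rw [finrank_eq_card_basis (binaryFormBasis K t), Fintype.card_fin]

variable (K) in
noncomputable def linearForm {m : ℕ} (i : Fin (m + 1)) : PmT K m 1 :=
  ⟨X i, isHomogeneous_X K i⟩

lemma linearForm_poly {m : ℕ} (i : Fin (m + 1)) : (linearForm K i).poly = X i := rfl

lemma polyMulBil_poly {m t : ℕ} (g : PmT K m 1) (h : PmT K m t) :
    (polyMulBil K m t g h).poly = g.poly * h.poly := rfl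

lemma polyMulBil_linearForm_zero_binaryFormBasis (t : ℕ) (i : Fin (t + 1)) :
    polyMulBil K 1 t (linearForm K 0) (binaryFormBasis K t i) =
      binaryFormBasis K (t + 1) i.succ := by
  refine PmT.ext ?_
  rw [polyMulBil_poly, binaryFormBasis_poly, binaryFormBasis_poly, Fin.val_succ,
    Nat.add_sub_add_right, linearForm_poly, pow_succ]
  ring

lemma polyMulBil_linearForm_one_binaryFormBasis (t : ℕ) (i : Fin (t + 1)) :
    polyMulBil K 1 t (linearForm K 1) (binaryFormBasis K t i) =
      binaryFormBasis K (t + 1) i.castSucc := by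
  refine PmT.ext ?_
  rw [polyMulBil_poly, binaryFormBasis_poly, binaryFormBasis_poly, Fin.val_castSucc,
    Nat.sub_add_comm i.is_le, linearForm_poly, pow_succ]
  ring

lemma exists_eq_smul_linearForm_add_smul_linearForm (g : PmT K 1 1) :
    ∃ c d : K, g = c • linearForm K 0 + d • linearForm K 1 := by
  have hx₀ : binaryFormBasis K 1 1 = linearForm K 0 :=
    PmT.ext (by simp [binaryFormBasis_poly, linearForm_poly])
  have hx₁ : binaryFormBasis K 1 0 = linearForm K 1 :=
    PmT.ext (by simp [binaryFormBasis_poly, linearForm_poly])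
  refine ⟨(binaryFormBasis K 1).repr g 1, (binaryFormBasis K 1).repr g 0, ?_⟩
  conv_lhs => rw [← (binaryFormBasis K 1).sum_repr g]
  rw [Fin.sum_univ_two, hx₀, hx₁, add_comm]

end BinaryForms

/-- Exactness of the Koszul complex of `(x₀, x₁)` on binary forms, written in the coordinates
where multiplication by `x₀` is `Fin.cons 0` and multiplication by `x₁` is `Fin.snoc · 0`. -/
lemma cons_zero_eq_snoc_zero_iff {M : Type*} [Zero M] {n : ℕ} (a b : Fin (n + 1) → M) :
    (Fin.cons 0 a : Fin (n + 2) → M) = Fin.snoc b 0 ↔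
      ∃ w : Fin n → M, a = Fin.snoc w 0 ∧ b = Fin.cons 0 w := by
  constructor
  · intro h
    have h' : (Fin.snoc (Fin.cons 0 (Fin.init a)) (a (Fin.last n)) : Fin (n + 2) → M) =
        Fin.snoc (Fin.cons (b 0) (Fin.tail b)) 0 := by
      rwa [← Fin.cons_snoc_eq_snoc_cons, Fin.snoc_init_self, Fin.cons_self_tail]
    obtain ⟨hcons, hlast⟩ := Fin.snoc_inj.mp h'
    obtain ⟨hb₀, hw⟩ := Fin.cons_inj.mp hcons
    refine ⟨Fin.init a, ?_, ?_⟩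
    · rw [← hlast, Fin.snoc_init_self]
    · rw [hw, hb₀, Fin.cons_self_tail]
  · rintro ⟨w, rfl, rfl⟩
    exact Fin.cons_snoc_eq_snoc_cons _ _ _

section TensorCoordinates

variable (K : Type) [Field K] (V : Type) [AddCommGroup V] [Module K V]

noncomputable def tupleEquivTensor (t : ℕ) : (Fin (t + 1) → V) ≃ₗ[K] V ⊗[K] PmT K 1 t :=
  (TensorProduct.piScalarRight K K V (Fin (t + 1))).symm ≪≫ₗ
    TensorProduct.congr (LinearEquiv.refl K V) (binaryFormBasis K t).equivFun.symm

lemma tupleEquivTensor_apply (t : ℕ) (v : Fin (t + 1) → V) :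
    tupleEquivTensor K V t v = ∑ i, v i ⊗ₜ binaryFormBasis K t i := by
  conv_lhs => rw [← Finset.univ_sum_single v, map_sum]
  refine Finset.sum_congr rfl fun i _ => ?_
  simp [tupleEquivTensor]

noncomputable def mulVar (t : ℕ) (i : Fin 2) :
    V ⊗[K] PmT K 1 t →ₗ[K] V ⊗[K] PmT K 1 (t + 1) :=
  LinearMap.lTensor V (polyMulBil K 1 t (linearForm K i))

lemma mulVar_zero_tupleEquivTensor (t : ℕ) (v : Fin (t + 1) → V) :
    mulVar K V t 0 (tupleEquivTensor K V t v) = tupleEquivTensor K V (t + 1) (Fin.cons 0 v) := by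
  simp only [tupleEquivTensor_apply, map_sum, Fin.sum_univ_succ (n := t + 1), mulVar,
    LinearMap.lTensor_tmul, polyMulBil_linearForm_zero_binaryFormBasis, Fin.cons_zero,
    Fin.cons_succ, TensorProduct.zero_tmul, zero_add]

lemma mulVar_one_tupleEquivTensor (t : ℕ) (v : Fin (t + 1) → V) :
    mulVar K V t 1 (tupleEquivTensor K V t v) = tupleEquivTensor K V (t + 1) (Fin.snoc v 0) := by
  simp only [tupleEquivTensor_apply, map_sum, Fin.sum_univ_castSucc (n := t + 1), mulVar,
    LinearMap.lTensor_tmul, polyMulBil_linearForm_one_binaryFormBasis, Fin.snoc_castSucc,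
    Fin.snoc_last, TensorProduct.zero_tmul, add_zero]

lemma mulVar_zero_eq_mulVar_one_iff (t : ℕ) (a b : V ⊗[K] PmT K 1 (t + 1)) :
    mulVar K V (t + 1) 0 a = mulVar K V (t + 1) 1 b ↔
      ∃ w, a = mulVar K V t 1 w ∧ b = mulVar K V t 0 w := by
  obtain ⟨a, rfl⟩ := (tupleEquivTensor K V (t + 1)).surjective a
  obtain ⟨b, rfl⟩ := (tupleEquivTensor K V (t + 1)).surjective b
  rw [mulVar_zero_tupleEquivTensor, mulVar_one_tupleEquivTensor,
    (tupleEquivTensor K V _).injective.eq_iff, cons_zero_eq_snoc_zero_iff]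
  refine ((tupleEquivTensor K V t).surjective.exists.trans (exists_congr fun w => ?_)).symm
  rw [mulVar_zero_tupleEquivTensor, mulVar_one_tupleEquivTensor,
    (tupleEquivTensor K V _).injective.eq_iff, (tupleEquivTensor K V _).injective.eq_iff]

lemma mulVar_comm (t : ℕ) (w : V ⊗[K] PmT K 1 t) :
    mulVar K V (t + 1) 0 (mulVar K V t 1 w) = mulVar K V (t + 1) 1 (mulVar K V t 0 w) :=
  (mulVar_zero_eq_mulVar_one_iff K V t _ _).mpr ⟨w, rfl, rfl⟩

lemma mulVar_one_injective (t : ℕ) : Function.Injective (mulVar K V t 1) := by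
  intro a b hab
  obtain ⟨a, rfl⟩ := (tupleEquivTensor K V t).surjective a
  obtain ⟨b, rfl⟩ := (tupleEquivTensor K V t).surjective b
  rw [mulVar_one_tupleEquivTensor, mulVar_one_tupleEquivTensor,
    (tupleEquivTensor K V _).injective.eq_iff] at hab
  rw [Fin.snoc_left_injective _ hab]

lemma eq_zero_of_mulVar_zero_eq_mulVar_one {a b : V ⊗[K] PmT K 1 0}
    (h : mulVar K V 0 0 a = mulVar K V 0 1 b) : a = 0 ∧ b = 0 := by
  obtain ⟨a, rfl⟩ := (tupleEquivTensor K V 0).surjective a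
  obtain ⟨b, rfl⟩ := (tupleEquivTensor K V 0).surjective b
  rw [mulVar_zero_tupleEquivTensor, mulVar_one_tupleEquivTensor,
    (tupleEquivTensor K V _).injective.eq_iff, cons_zero_eq_snoc_zero_iff] at h
  obtain ⟨w, rfl, rfl⟩ := h
  simp [Subsingleton.elim w 0]

end TensorCoordinates

lemma ZeroDimInProd.eq_zero_of_forall_ξ_mul_eq_zero {K V : Type} [Field K] [AddCommGroup V]
    [Module K V] {m : ℕ} (Z : ZeroDimInProd K V m) {c : Z.A} (h : ∀ i, Z.ξ i * c = 0) :
    c = 0 := by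
  have hle : Ideal.span (Set.range Z.ξ) ≤ (Submodule.span Z.A {c}).annihilator :=
    Ideal.span_le.mpr (by
      rintro _ ⟨i, rfl⟩
      exact (Submodule.mem_annihilator_span_singleton c _).mpr (h i))
  rwa [Z.spanξ, top_le_iff, Submodule.annihilator_eq_top_iff,
    Submodule.span_singleton_eq_bot] at hle

section Restriction

variable {K : Type} [Field K] {V : Type} [AddCommGroup V] [Module K V] (Z : ZeroDimInProd K V 1)

lemma evMap_mulVar (t : ℕ) (i : Fin 2) (w : V ⊗[K] PmT K 1 t) :
    evMap Z (t + 1) (mulVar K V t i w) = Z.ξ i * evMap Z t w := by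
  simpa [mulVar, linearForm_poly] using LinearMap.congr_fun (evMap_mul Z t (linearForm K i)) w

lemma range_evMap_succ_eq_top {t : ℕ} (h : LinearMap.range (evMap Z t) = ⊤) :
    LinearMap.range (evMap Z (t + 1)) = ⊤ := by
  refine eq_top_iff.mpr fun c _ => ?_
  obtain ⟨f, rfl⟩ := Ideal.mem_span_range_iff_exists_fun.mp
    (Z.spanξ ▸ Submodule.mem_top : c ∈ Ideal.span (Set.range Z.ξ))
  refine Submodule.sum_mem _ fun i _ => ?_
  obtain ⟨w, hw⟩ : f i ∈ LinearMap.range (evMap Z t) := h ▸ Submodule.mem_top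
  exact ⟨mulVar K V t i w, by rw [evMap_mulVar, hw, mul_comm]⟩

noncomputable def mulVarH (t : ℕ) (i : Fin 2) : H0IZ Z t →ₗ[K] H0IZ Z (t + 1) :=
  (mulVar K V t i).restrict fun w hw => by
    rw [LinearMap.mem_ker, evMap_mulVar, LinearMap.mem_ker.mp hw, mul_zero]

noncomputable def mulVarSum (t : ℕ) : H0IZ Z t × H0IZ Z t →ₗ[K] H0IZ Z (t + 1) :=
  (mulVarH Z t 0).coprod (mulVarH Z t 1)

noncomputable def koszulMap (t : ℕ) : H0IZ Z t →ₗ[K] H0IZ Z (t + 1) × H0IZ Z (t + 1) :=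
  (mulVarH Z t 1).prod (-mulVarH Z t 0)

lemma muMap_linearForm_tmul (t : ℕ) (i : Fin 2) (w : H0IZ Z t) :
    muMap Z t (linearForm K i ⊗ₜ w) = mulVarH Z t i w := rfl

lemma range_muMap (t : ℕ) : LinearMap.range (muMap Z t) = LinearMap.range (mulVarSum Z t) := by
  refine le_antisymm ?_ ?_
  · rintro _ ⟨z, rfl⟩
    induction z using TensorProduct.induction_on with
    | zero => rw [map_zero]; exact zero_mem _
    | tmul g w =>
      obtain ⟨c, d, rfl⟩ := exists_eq_smul_linearForm_add_smul_linearForm g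
      refine ⟨(c • w, d • w), ?_⟩
      rw [TensorProduct.add_tmul, ← TensorProduct.smul_tmul', ← TensorProduct.smul_tmul',
        map_add, map_smul, map_smul, muMap_linearForm_tmul, muMap_linearForm_tmul]
      simp [mulVarSum]
    | add x y hx hy => rw [map_add]; exact add_mem hx hy
  · rintro _ ⟨⟨a, b⟩, rfl⟩
    exact ⟨linearForm K 0 ⊗ₜ a + linearForm K 1 ⊗ₜ b, by
      rw [map_add, muMap_linearForm_tmul, muMap_linearForm_tmul]; rfl⟩

lemma koszulMap_injective (t : ℕ) : Function.Injective (koszulMap Z t) := by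
  intro v w h
  exact Subtype.ext (mulVar_one_injective K V t (congrArg (fun p => p.1.1) h))

lemma mulVarSum_eq_zero_iff {t : ℕ} (a b : H0IZ Z t) :
    mulVarSum Z t (a, b) = 0 ↔ mulVar K V t 0 a.1 = mulVar K V t 1 (-b.1) := by
  rw [map_neg, ← add_eq_zero_iff_eq_neg]
  exact Subtype.ext_iff (a2 := (0 : H0IZ Z (t + 1)))

lemma range_koszulMap (t : ℕ) :
    LinearMap.range (koszulMap Z t) = LinearMap.ker (mulVarSum Z (t + 1)) := by
  refine le_antisymm ?_ fun ⟨a, b⟩ hab => ?_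
  · rintro _ ⟨w, rfl⟩
    rw [LinearMap.mem_ker, mulVarSum_eq_zero_iff]
    show mulVar K V (t + 1) 0 (mulVar K V t 1 w.1) =
      mulVar K V (t + 1) 1 (-(-mulVar K V t 0 w.1))
    rw [neg_neg, mulVar_comm]
  · obtain ⟨w, ha, hb⟩ := (mulVar_zero_eq_mulVar_one_iff K V t _ _).mp
      ((mulVarSum_eq_zero_iff Z a b).mp hab)
    have hw : w ∈ LinearMap.ker (evMap Z t) := by
      refine LinearMap.mem_ker.mpr
        (Z.eq_zero_of_forall_ξ_mul_eq_zero (Fin.forall_fin_two.mpr ⟨?_, ?_⟩))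
      · rw [← evMap_mulVar, ← hb, map_neg, LinearMap.mem_ker.mp b.2, neg_zero]
      · rw [← evMap_mulVar, ← ha, LinearMap.mem_ker.mp a.2]
    refine ⟨⟨w, hw⟩, Prod.ext (Subtype.ext ha.symm) (Subtype.ext ?_)⟩
    show -mulVar K V t 0 w = b.1
    rw [← hb, neg_neg]

lemma ker_mulVarSum_zero : LinearMap.ker (mulVarSum Z 0) = ⊥ := by
  refine eq_bot_iff.mpr fun ⟨a, b⟩ hab => ?_
  obtain ⟨ha, hb⟩ :=
    eq_zero_of_mulVar_zero_eq_mulVar_one K V ((mulVarSum_eq_zero_iff Z a b).mp hab)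
  exact Prod.ext (Subtype.ext ha) (Subtype.ext (neg_eq_zero.mp hb))

end Restriction

section Dimensions

variable {K : Type} [Field K] {V : Type} [AddCommGroup V] [Module K V] (Z : ZeroDimInProd K V 1)

lemma h1ZP_eq_zero_iff (t : ℕ) : h1ZP Z t = 0 ↔ LinearMap.range (evMap Z t) = ⊤ := by
  rw [h1ZP, Nat.sub_eq_zero_iff_le]
  exact ⟨fun h => Submodule.eq_top_of_finrank_eq (le_antisymm (Submodule.finrank_le _) h),
    fun h => by rw [h, finrank_top]⟩

lemma h1ZP_succ_eq_zero {t : ℕ} (h : h1ZP Z t = 0) : h1ZP Z (t + 1) = 0 :=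
  (h1ZP_eq_zero_iff Z _).mpr (range_evMap_succ_eq_top Z ((h1ZP_eq_zero_iff Z t).mp h))

lemma finrank_ker_mulVarSum_succ (t : ℕ) :
    finrank K (LinearMap.ker (mulVarSum Z (t + 1))) = h0ZP Z t := by
  rw [← range_koszulMap, LinearMap.finrank_range_of_inj (koszulMap_injective Z t), h0ZP]

variable [FiniteDimensional K V]

instance (t : ℕ) : FiniteDimensional K (H0IZ Z t) :=
  inferInstanceAs (FiniteDimensional K (LinearMap.ker (evMap Z t)))

lemma h0ZP_add_finrank (t : ℕ) :
    h0ZP Z t + finrank K Z.A = finrank K V * (t + 1) + h1ZP Z t := by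
  have hrank := LinearMap.finrank_range_add_finrank_ker (evMap Z t)
  rw [Module.finrank_tensorProduct, finrank_binaryForms] at hrank
  have hle := Submodule.finrank_le (LinearMap.range (evMap Z t))
  have hh0 : h0ZP Z t = finrank K (LinearMap.ker (evMap Z t)) := rfl
  have hh1 : h1ZP Z t = finrank K Z.A - finrank K (LinearMap.range (evMap Z t)) := rfl
  omega

lemma finrank_quotient_range_muMap_add (t : ℕ) :
    finrank K (H0IZ Z (t + 1) ⧸ LinearMap.range (muMap Z t)) + 2 * h0ZP Z t =
      h0ZP Z (t + 1) + finrank K (LinearMap.ker (mulVarSum Z t)) := by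
  have hquot := Submodule.finrank_quotient_add_finrank (LinearMap.range (muMap Z t))
  have hrank := LinearMap.finrank_range_add_finrank_ker (mulVarSum Z t)
  have hrange : finrank K (LinearMap.range (muMap Z t)) =
      finrank K (LinearMap.range (mulVarSum Z t)) := by rw [range_muMap]
  rw [Module.finrank_prod] at hrank
  rw [h0ZP, h0ZP]
  omega

end Dimensions

theorem statement5_general (K : Type) [Field K]
    (V : Type) [AddCommGroup V] [Module K V] [FiniteDimensional K V]
    (Z : ZeroDimInProd K V 1)
    (hz : ∃ z : ℕ, h1ZP Z z = 0) :
    (0 < Nat.find hz →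
      finrank K (H0IZ Z (Nat.find hz + 1) ⧸ LinearMap.range (muMap Z (Nat.find hz))) =
        h1ZP Z (Nat.find hz - 1)) ∧
    (Nat.find hz = 0 →
      finrank K (H0IZ Z (Nat.find hz + 1) ⧸ LinearMap.range (muMap Z (Nat.find hz))) =
        finrank K Z.A) := by
  have he : h1ZP Z (Nat.find hz) = 0 := Nat.find_spec hz
  generalize Nat.find hz = e at he ⊢
  have hcoker := finrank_quotient_range_muMap_add Z e
  have h0e := h0ZP_add_finrank Z e
  have h0e' := h0ZP_add_finrank Z (e + 1)
  rw [he] at h0e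
  rw [h1ZP_succ_eq_zero Z he] at h0e'
  cases e with
  | zero =>
    refine ⟨fun h => absurd h (lt_irrefl 0), fun _ => ?_⟩
    rw [ker_mulVarSum_zero, finrank_bot] at hcoker
    linarith
  | succ s =>
    refine ⟨fun _ => ?_, fun h => absurd h s.succ_ne_zero⟩
    have h0s := h0ZP_add_finrank Z s
    rw [finrank_ker_mulVarSum_succ] at hcoker
    rw [Nat.add_sub_cancel]
    linarith

/-- Proposition `bg1`(3)-(4).
With `Y`, `R`, `X = Y × ℙ^1`, `Z` and `e` as in Statement 4, the cokernel of the
multiplication map `μ_e` has dimension `h^1(X, 𝓘_Z ⊗ R ⊠ (e-1))`; in particular if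
`e = 0` then `dim coker(μ_0) = deg Z` (`= dim_K H^0(Z, O_Z)`). -/
theorem statement5 (K : Type) [Field K] [IsAlgClosed K] [CharZero K]
    (V : Type) [AddCommGroup V] [Module K V] [FiniteDimensional K V]
    (Z : ZeroDimInProd K V 1)
    (hz : ∃ z : ℕ, h1ZP Z z = 0) :
    (0 < Nat.find hz →
      finrank K (H0IZ Z (Nat.find hz + 1) ⧸ LinearMap.range (muMap Z (Nat.find hz))) =
        h1ZP Z (Nat.find hz - 1)) ∧
    (Nat.find hz = 0 →
      finrank K (H0IZ Z (Nat.find hz + 1) ⧸ LinearMap.range (muMap Z (Nat.find hz))) =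
        finrank K Z.A) :=
  statement5_general K V Z hz

end MultiProjPaper
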